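/- Let ⟨·⟩_g be ℚ-valued correlators that satisfy Theorem 1.2: (2g+n-1)⟨τ_0 ∏_{j=1}^n τ_{d_j}⟩_g = (1/12)⟨τ_0^4 ∏ τ_{d_j}⟩_{g-1} + (1/2)∑_{I⊔J, g'}⟨τ_0^2 ∏_I τ_{d_i}⟩_{g'}⟨τ_0^2 ∏_J τ_{d_j}⟩_{g-g'}, and also the simplified recursion: (2g+n-1)⟨τ_r ∏_{j=1}^n τ_{d_j}⟩_g = (2r+3)⟨τ_0 τ_{r+1} ∏ τ_{d_j}⟩_g - (1/6)⟨τ_0^3 τ_r ∏ τ_{d_j}⟩_{g-1} - ∑_{I⊔J,g'}⟨τ_0 τ_r ∏_I τ_{d_i}⟩_{g'}⟨τ_0^2 ∏_J τ_{d_j}⟩_{g-g'}. Then they satisfy Theorem 1.1: (2g+n-1)(2g+n-2)⟨∏_{j=1}^n τ_{d_j}⟩_g = ((2d_1+3)/12)⟨τ_0^4 τ_{d_1+1} ∏_{j=2}^n τ_{d_j}⟩_{g-1} - ((2g+n-1)/6)⟨τ_0^3 ∏_{j=1}^n τ_{d_j}⟩_{g-1} + ∑_{I⊔J,g'}(2d_1+3)⟨τ_{d_1+1}τ_0^2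 ∏_I τ_{d_i}⟩_{g'}⟨τ_0^2 ∏_J τ_{d_j}⟩_{g-g'} - ∑_{I⊔J,g'}(2g+n-1)⟨τ_{d_1}τ_0 ∏_I τ_{d_i}⟩_{g'}⟨τ_0^2 ∏_J τ_{d_j}⟩_{g-g'}. -/

import Mathlib

/-!
Take the simplified recursion with `r = d₁`, multiplied by `2g + m`, and add `2d₁ + 3` times
Theorem 1.2 for the insertions `τ₀ τ_{d₁+1} ∏ τ_{d_j}`. In the split sum of the latter, the
new insertion `τ_{d₁+1}` lands in either factor; the two halves agree under
`(I, g') ↦ (J, g - g')`, which cancels the factor `1/2`, and what remains is a linear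
combination of the two identities.
-/

open Finset

theorem Finset.sum_powerset_eq_sum_map_antidiagonal {ι α M : Type*} [DecidableEq ι]
    [AddCommMonoid M] (s : Finset ι) (d : ι → α) (φ : Multiset α → Multiset α → M) :
    ∑ I ∈ s.powerset, φ (I.val.map d) ((s \ I).val.map d)
      = ((s.val.map d).antidiagonal.map fun p => φ p.1 p.2).sum := by
  induction s using Finset.induction_on generalizing φ with
  | empty => simp
  | insert a s ha ih =>
    rw [sum_powerset_insert ha, insert_val_of_notMem ha, Multiset.map_cons,
      Multiset.antidiagonal_cons, Multiset.map_add, Multiset.sum_add, Multiset.map_map,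
      Multiset.map_map]
    congr 1
    · refine (sum_congr rfl fun t ht => ?_).trans (ih fun X Y => φ X (d a ::ₘ Y))
      have hat : a ∉ t := fun h => ha (mem_powerset.1 ht h)
      rw [insert_sdiff_of_notMem _ hat, insert_val_of_notMem (fun h => ha (mem_sdiff.1 h).1),
        Multiset.map_cons]
    · refine (sum_congr rfl fun t ht => ?_).trans (ih fun X Y => φ (d a ::ₘ X) Y)
      have hat : a ∉ t := fun h => ha (mem_powerset.1 ht h)
      rw [insert_sdiff_insert, sdiff_insert_of_notMem ha, insert_val_of_notMem hat,
        Multiset.map_cons]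

theorem Fin.univ_val_map_cons {α : Type*} {m : ℕ} (a : α) (d : Fin m → α) :
    (univ : Finset (Fin (m + 1))).val.map (Fin.cons a d)
      = a ::ₘ (univ : Finset (Fin m)).val.map d := by
  simp [Fin.univ_val_map, List.ofFn_succ]

theorem Multiset.sum_map_antidiagonal_cons_of_symm {α M : Type*} [AddCommMonoid M]
    (φ : Multiset α → Multiset α → M) (hφ : ∀ X Y, φ X Y = φ Y X) (a : α) (s : Multiset α) :
    ((a ::ₘ s).antidiagonal.map fun p => φ p.1 p.2).sum
      = 2 • (s.antidiagonal.map fun p => φ (a ::ₘ p.1) p.2).sum := by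
  rw [antidiagonal_cons, map_add, sum_add, map_map, map_map, two_nsmul]
  congr 1
  conv_lhs => rw [← map_swap_antidiagonal s, map_map]
  exact congrArg sum (map_congr rfl fun p _ => hφ _ _)

theorem Finset.sum_range_succ_mul_sub_comm {R : Type*} [CommSemiring R] (f h : ℕ → R)
    (n : ℕ) :
    ∑ k ∈ range (n + 1), f k * h (n - k) = ∑ k ∈ range (n + 1), h k * f (n - k) := by
  rw [← Nat.sum_antidiagonal_eq_sum_range_succ (fun i j => f i * h j),
    ← Nat.sum_antidiagonal_eq_sum_range_succ (fun i j => h i * f j),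
    ← Nat.sum_antidiagonal_swap]
  simp only [Prod.fst_swap, Prod.snd_swap, mul_comm]

theorem Finset.sum_powerset_univ_fin_cons_of_symm {α M : Type*} [AddCommMonoid M] {m : ℕ}
    (φ : Multiset α → Multiset α → M) (hφ : ∀ X Y, φ X Y = φ Y X) (a : α) (d : Fin m → α) :
    ∑ I ∈ (univ : Finset (Fin (m + 1))).powerset,
        φ (I.val.map (Fin.cons a d)) ((univ \ I).val.map (Fin.cons a d))
      = 2 • ∑ I ∈ (univ : Finset (Fin m)).powerset,
          φ (a ::ₘ I.val.map d) ((univ \ I).val.map d) := by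
  rw [sum_powerset_eq_sum_map_antidiagonal, Fin.univ_val_map_cons,
    Multiset.sum_map_antidiagonal_cons_of_symm φ hφ,
    sum_powerset_eq_sum_map_antidiagonal (φ := fun X Y => φ (a ::ₘ X) Y)]

/-- `d1` is the distinguished index and `d : Fin m → ℕ` lists `d₂, …, d_n`,
so `n = m + 1`. -/
theorem thm11_from_thm12_and_simplified (C : ℕ → Multiset ℕ → ℚ)
    (hT12 : ∀ (g n : ℕ) (d : Fin n → ℕ),
      (2 * (g : ℚ) + n - 1) * C g (0 ::ₘ Multiset.map d univ.val)
        = (1 / 12) * (if 1 ≤ g then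
              C (g - 1) (0 ::ₘ 0 ::ₘ 0 ::ₘ 0 ::ₘ Multiset.map d univ.val) else 0)
          + (1 / 2) * ∑ I ∈ univ.powerset, ∑ g' ∈ range (g + 1),
              C g' (0 ::ₘ 0 ::ₘ Multiset.map d I.val) *
                C (g - g') (0 ::ₘ 0 ::ₘ Multiset.map d (univ \ I).val))
    (hSimp : ∀ (g n r : ℕ) (d : Fin n → ℕ),
      (2 * (g : ℚ) + n - 1) * C g (r ::ₘ Multiset.map d univ.val)
        = (2 * (r : ℚ) + 3) * C g (0 ::ₘ (r + 1) ::ₘ Multiset.map d univ.val)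
          - (1 / 6) * (if 1 ≤ g then
              C (g - 1) (0 ::ₘ 0 ::ₘ 0 ::ₘ r ::ₘ Multiset.map d univ.val) else 0)
          - ∑ I ∈ univ.powerset, ∑ g' ∈ range (g + 1),
              C g' (0 ::ₘ r ::ₘ Multiset.map d I.val) *
                C (g - g') (0 ::ₘ 0 ::ₘ Multiset.map d (univ \ I).val)) :
    ∀ (g m : ℕ) (d1 : ℕ) (d : Fin m → ℕ),
      (2 * (g : ℚ) + m) * (2 * (g : ℚ) + m - 1) * C g (d1 ::ₘ Multiset.map d univ.val)
        = ((2 * (d1 : ℚ) + 3) / 12) * (if 1 ≤ g then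
              C (g - 1) (0 ::ₘ 0 ::ₘ 0 ::ₘ 0 ::ₘ (d1 + 1) ::ₘ Multiset.map d univ.val) else 0)
          - ((2 * (g : ℚ) + m) / 6) * (if 1 ≤ g then
              C (g - 1) (0 ::ₘ 0 ::ₘ 0 ::ₘ d1 ::ₘ Multiset.map d univ.val) else 0)
          + ∑ I ∈ univ.powerset, ∑ g' ∈ range (g + 1),
              (2 * (d1 : ℚ) + 3) * C g' ((d1 + 1) ::ₘ 0 ::ₘ 0 ::ₘ Multiset.map d I.val) *
                C (g - g') (0 ::ₘ 0 ::ₘ Multiset.map d (univ \ I).val)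
          - ∑ I ∈ univ.powerset, ∑ g' ∈ range (g + 1),
              (2 * (g : ℚ) + m) * C g' (d1 ::ₘ 0 ::ₘ Multiset.map d I.val) *
                C (g - g') (0 ::ₘ 0 ::ₘ Multiset.map d (univ \ I).val) := by
  intro g m d1 d
  have hS := hSimp g m d1 d
  have hT := hT12 g (m + 1) (Fin.cons (d1 + 1) d)
  rw [Fin.univ_val_map_cons, Finset.sum_powerset_univ_fin_cons_of_symm
    (fun X Y => ∑ g' ∈ range (g + 1), C g' (0 ::ₘ 0 ::ₘ X) * C (g - g') (0 ::ₘ 0 ::ₘ Y))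
    (fun X Y => sum_range_succ_mul_sub_comm (C · (0 ::ₘ 0 ::ₘ X)) (C · (0 ::ₘ 0 ::ₘ Y)) g)]
    at hT
  simp only [Multiset.cons_swap (d1 + 1) 0, Multiset.cons_swap d1 0, mul_assoc,
    ← Finset.mul_sum]
  push_cast at hT
  linear_combination (2 * (g : ℚ) + m) * hS + (2 * (d1 : ℚ) + 3) * hT
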